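/- Let α be a simple multisegment and β any multisegment such that α ≤ β and L_β ≤ L_α. Then α = β. -/

import Mathlib

/-- A finite multiset of integer pairs `(b, e)` is a multisegment if each pair
satisfies `b ≤ e`; the pair `(b, e)` encodes the segment `{b, b+1, …, e}`. -/
def IsMultisegment (α : Multiset (ℤ × ℤ)) : Prop := ∀ p ∈ α, p.1 ≤ p.2

/-- The length `e - b + 1` of the segment `(b, e)`. -/
def segLen (p : ℤ × ℤ) : ℕ := (p.2 - p.1 + 1).toNat

/-- `L_α`: the maximal length of a segment of `α`. -/
def maxLen (α : Multiset (ℤ × ℤ)) : ℕ := (α.map segLen).sup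

/-- The union of the segments `p` and `q` is a segment strictly containing both. -/
def Linked (p q : ℤ × ℤ) : Prop :=
  q.1 ≤ p.2 + 1 ∧ p.1 ≤ q.2 + 1 ∧
    (min p.1 q.1, max p.2 q.2) ≠ p ∧ (min p.1 q.1, max p.2 q.2) ≠ q

/-- The intersection of two segments, as a multiset (empty if the segments are disjoint). -/
def interMS (p q : ℤ × ℤ) : Multiset (ℤ × ℤ) :=
  if max p.1 q.1 ≤ min p.2 q.2 then {(max p.1 q.1, min p.2 q.2)} else 0

/-- An elementary operation replaces two segments whose union is a segment strictly
containing both by their union and (if nonempty) their intersection. -/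
def ElemStep (α β : Multiset (ℤ × ℤ)) : Prop :=
  ∃ p q rest, α = p ::ₘ q ::ₘ rest ∧ Linked p q ∧
    β = (min p.1 q.1, max p.2 q.2) ::ₘ (interMS p q + rest)

/-- The partial order on multisegments: `α ≤ β` iff `β` is obtained from `α` by
a finite (possibly empty) sequence of elementary operations. -/
def msLE (α β : Multiset (ℤ × ℤ)) : Prop := Relation.ReflTransGen ElemStep α β

/-- Mœglin–Waldspurger: the chain `Δ_e, Δ_{e-1}, …, Δ_m` starting from `Δ`,
where at each step we pass to a segment of `α` with end value one less, preceding
the current segment, and with maximal base value (fuel-driven recursion). -/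
def mwChainAux : ℕ → Multiset (ℤ × ℤ) → ℤ × ℤ → List (ℤ × ℤ)
  | 0, _, Δ => [Δ]
  | n + 1, α, Δ =>
    let s := ((α.filter (fun p => p.2 = Δ.2 - 1 ∧ p.1 < Δ.1)).map Prod.fst).toFinset
    if h : s.Nonempty then Δ :: mwChainAux n α (s.max' h, Δ.2 - 1) else [Δ]

/-- The Mœglin–Waldspurger chain `Δ_e, Δ_{e-1}, …, Δ_m` of `α`: here `e` is the largest
end value of a segment of `α` and `Δ_e` has maximal base value among segments with
end value `e`. -/
def mwChain (α : Multiset (ℤ × ℤ)) : List (ℤ × ℤ) :=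
  let ends := (α.map Prod.snd).toFinset
  if h : ends.Nonempty then
    let e := ends.max' h
    let bases := ((α.filter (fun p => p.2 = e)).map Prod.fst).toFinset
    if hb : bases.Nonempty then mwChainAux α.card α (bases.max' hb, e) else []
  else []

/-- `M(α) = [m, e]`. -/
def mwSegment (α : Multiset (ℤ × ℤ)) : ℤ × ℤ :=
  (((mwChain α).getLastD (0, 0)).2, ((mwChain α).headD (0, 0)).2)

/-- Delete the end value from a segment, discarding the segment if it becomes empty. -/
def mwShrink (p : ℤ × ℤ) : Multiset (ℤ × ℤ) :=
  if p.1 ≤ p.2 - 1 then {(p.1, p.2 - 1)} else 0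

/-- `α ∖ M(α)`: delete the integer `i` from the segment `Δ_i` for each `m ≤ i ≤ e`. -/
def mwResidual (α : Multiset (ℤ × ℤ)) : Multiset (ℤ × ℤ) :=
  (α - ↑(mwChain α)) + (↑(mwChain α) : Multiset (ℤ × ℤ)).bind mwShrink

/-- The total number of integers occurring in the segments of `α` (with multiplicity). -/
def msSize (α : Multiset (ℤ × ℤ)) : ℕ := (α.map segLen).sum

def tildeAux : ℕ → Multiset (ℤ × ℤ) → Multiset (ℤ × ℤ)
  | 0, _ => 0
  | n + 1, α => if α = 0 then 0 else mwSegment α ::ₘ tildeAux n (mwResidual α)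

/-- The Zelevinsky involution `α ↦ α~`, computed by the Mœglin–Waldspurger algorithm:
`∅~ = ∅` and `α~ = {M(α)} ⊎ (α ∖ M(α))~`. -/
def tilde (α : Multiset (ℤ × ℤ)) : Multiset (ℤ × ℤ) := tildeAux (msSize α) α

/-- The simple multisegment `{[b, e], [b+1, e+1], …, [b+n-1, e+n-1]}`. -/
def simpleMS (b e : ℤ) (n : ℕ) : Multiset (ℤ × ℤ) :=
  (Multiset.range n).map fun k => (b + (k : ℤ), e + (k : ℤ))

/-- A multisegment is simple if it has the form `{[b,e], [b+1,e+1], …, [b+n-1, e+n-1]}`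
with `b ≤ e` and `n ≥ 1`. -/
def IsSimple (α : Multiset (ℤ × ℤ)) : Prop :=
  ∃ (b e : ℤ) (n : ℕ), b ≤ e ∧ 1 ≤ n ∧ α = simpleMS b e n

/-- The union `⋃_{Δ ∈ α} Δ` of the segments of `α`, as a set of integers. -/
def unionSet (α : Multiset (ℤ × ℤ)) : Set ℤ := {x | ∃ p ∈ α, p.1 ≤ x ∧ x ≤ p.2}

/-- `c_α`: the minimal number of segments whose union is `⋃_{Δ ∈ α} Δ`. -/
noncomputable def cNum (α : Multiset (ℤ × ℤ)) : ℕ :=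
  sInf {n | ∃ β : Multiset (ℤ × ℤ), IsMultisegment β ∧ β.card = n ∧ unionSet β = unionSet α}


/-!
All segments of a simple multisegment have the same length `L_α`, and an elementary
operation produces the union of two linked segments, which is strictly longer than each of
them. So the first elementary operation on `α` already raises the maximal length above `L_α`,
and no later operation lowers it again.
-/

lemma segLen_le_maxLen {α : Multiset (ℤ × ℤ)} {p : ℤ × ℤ} (hp : p ∈ α) :
    segLen p ≤ maxLen α :=
  Multiset.le_sup (Multiset.mem_map_of_mem segLen hp)

lemma segLen_le_segLen_union (p q : ℤ × ℤ) :
    segLen p ≤ segLen (min p.1 q.1, max p.2 q.2) := by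
  simp only [segLen]; omega

lemma segLen_lt_segLen_union {p q : ℤ × ℤ} (hp : p.1 ≤ p.2)
    (hne : (min p.1 q.1, max p.2 q.2) ≠ p) :
    segLen p < segLen (min p.1 q.1, max p.2 q.2) := by
  have hgrow : min p.1 q.1 ≠ p.1 ∨ max p.2 q.2 ≠ p.2 := by
    contrapose! hne
    exact Prod.ext hne.1 hne.2
  simp only [segLen]; omega

lemma maxLen_le_iff {α : Multiset (ℤ × ℤ)} {n : ℕ} :
    maxLen α ≤ n ↔ ∀ p ∈ α, segLen p ≤ n := by
  simp only [maxLen, Multiset.sup_le, Multiset.forall_mem_map_iff]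

lemma ElemStep.maxLen_le {α β : Multiset (ℤ × ℤ)} (h : ElemStep α β) :
    maxLen α ≤ maxLen β := by
  obtain ⟨p, q, rest, rfl, -, rfl⟩ := h
  have hunion :=
    segLen_le_maxLen (Multiset.mem_cons_self (min p.1 q.1, max p.2 q.2) (interMS p q + rest))
  refine maxLen_le_iff.mpr fun r hr => ?_
  rcases Multiset.mem_cons.mp hr with rfl | hr
  · exact (segLen_le_segLen_union r q).trans hunion
  rcases Multiset.mem_cons.mp hr with rfl | hr
  · have hr := segLen_le_segLen_union r p
    rw [min_comm, max_comm] at hr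
    exact hr.trans hunion
  · exact segLen_le_maxLen (Multiset.mem_cons_of_mem (Multiset.mem_add.mpr (Or.inr hr)))

lemma msLE.maxLen_le {α β : Multiset (ℤ × ℤ)} (h : msLE α β) :
    maxLen α ≤ maxLen β := by
  induction h with
  | refl => exact le_rfl
  | tail _ hstep ih => exact ih.trans hstep.maxLen_le

lemma mem_simpleMS {b e : ℤ} {n : ℕ} {p : ℤ × ℤ} :
    p ∈ simpleMS b e n ↔ ∃ k < n, p = (b + k, e + k) := by
  simp [simpleMS, eq_comm]

lemma maxLen_simpleMS_le_segLen {b e : ℤ} {n : ℕ} {p : ℤ × ℤ} (hp : p ∈ simpleMS b e n) :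
    maxLen (simpleMS b e n) ≤ segLen p := by
  obtain ⟨k, -, rfl⟩ := mem_simpleMS.mp hp
  refine maxLen_le_iff.mpr fun r hr => ?_
  obtain ⟨j, -, rfl⟩ := mem_simpleMS.mp hr
  simp only [segLen]; omega

lemma IsSimple.maxLen_lt_of_elemStep {α γ : Multiset (ℤ × ℤ)} (hα : IsSimple α)
    (h : ElemStep α γ) : maxLen α < maxLen γ := by
  obtain ⟨b, e, n, hbe, -, rfl⟩ := hα
  obtain ⟨p, q, rest, hsplit, hlink, rfl⟩ := h
  have hp : p ∈ simpleMS b e n := hsplit ▸ Multiset.mem_cons_self p _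
  have hp_seg : p.1 ≤ p.2 := by
    obtain ⟨k, -, rfl⟩ := mem_simpleMS.mp hp
    simpa using hbe
  calc maxLen (simpleMS b e n) ≤ segLen p := maxLen_simpleMS_le_segLen hp
    _ < segLen (min p.1 q.1, max p.2 q.2) := segLen_lt_segLen_union hp_seg hlink.2.2.1
    _ ≤ _ := segLen_le_maxLen (Multiset.mem_cons_self _ _)

theorem eq_of_simple_of_msLE_of_maxLen_le_general (α β : Multiset (ℤ × ℤ))
    (hα : IsSimple α) (h : msLE α β)
    (hL : maxLen β ≤ maxLen α) :
    α = β := by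
  rcases Relation.ReflTransGen.cases_head h with rfl | ⟨γ, hstep, hrest⟩
  · rfl
  · have hlt : maxLen α < maxLen γ := hα.maxLen_lt_of_elemStep hstep
    have hle : maxLen γ ≤ maxLen β := msLE.maxLen_le hrest
    omega

/-- If `α` is simple, `α ≤ β` and `L_β ≤ L_α`, then `α = β`. -/
theorem eq_of_simple_of_msLE_of_maxLen_le (α β : Multiset (ℤ × ℤ))
    (hα : IsSimple α) (hβ : IsMultisegment β) (h : msLE α β)
    (hL : maxLen β ≤ maxLen α) :
    α = β :=
  eq_of_simple_of_msLE_of_maxLen_le_general α β hα h hL
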